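/- arXiv:1302.3752 — 2 statements merged into one kernel-verified Lean document; each statement's English description precedes it below -/
import Mathlib

section
/- Fix an interval [β_i, β_{i+1}] ⊆ [C_p, T]. The contribution to the waste as a function of q_i has the form K + A·q_i·∫_{β_i}^{β_{i+1}} (C_p/T - p·t/T) dt with A > 0; hence the waste is minimized by q_i = 0 whenever β_{i+1} ≤ C_p/p, and by q_i = 1 whenever β_i ≥ C_p/p. -/
/-! The waste is affine in `q` with slope `A · ∫ (Cp - p t) / T`, and `A > 0`. On `[β₁, β₂]` the
integrand `(Cp - p t) / T` has constant sign: nonnegative when `β₂ ≤ Cp / p`, nonpositive when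
`Cp / p ≤ β₁`. So the affine function is minimized over `[0, 1]` at the left or the right end. -/

lemma integral_div_sub_div_nonneg {T Cp p a b : ℝ} (hT : 0 < T) (hp : 0 < p) (hab : a ≤ b)
    (hb : b ≤ Cp / p) : 0 ≤ ∫ t in a..b, (Cp / T - p * t / T) := by
  refine intervalIntegral.integral_nonneg hab fun t ht =>
    sub_nonneg.2 (div_le_div_of_nonneg_right ?_ hT.le)
  calc p * t ≤ p * b := mul_le_mul_of_nonneg_left ht.2 hp.le
    _ ≤ Cp := (le_div_iff₀' hp).1 hb

lemma integral_div_sub_div_nonpos {T Cp p a b : ℝ} (hT : 0 < T) (hp : 0 < p) (hab : a ≤ b)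
    (ha : Cp / p ≤ a) : ∫ t in a..b, (Cp / T - p * t / T) ≤ 0 := by
  have hneg : 0 ≤ ∫ t in a..b, (p * t / T - Cp / T) := by
    refine intervalIntegral.integral_nonneg hab fun t ht =>
      sub_nonneg.2 (div_le_div_of_nonneg_right ?_ hT.le)
    calc Cp ≤ p * a := (div_le_iff₀' hp).1 ha
      _ ≤ p * t := mul_le_mul_of_nonneg_left ht.1 hp.le
  rw [← neg_nonneg, ← intervalIntegral.integral_neg]
  simpa only [neg_sub] using hneg

lemma add_mul_zero_mul_le {K A I q : ℝ} (hA : 0 ≤ A) (hI : 0 ≤ I) (hq : 0 ≤ q) :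
    K + A * 0 * I ≤ K + A * q * I := by
  simp only [mul_zero, zero_mul, add_zero, le_add_iff_nonneg_right]
  positivity

lemma add_mul_one_mul_le {K A I q : ℝ} (hA : 0 ≤ A) (hI : I ≤ 0) (hq : q ≤ 1) :
    K + A * 1 * I ≤ K + A * q * I := by
  have : 0 ≤ A * (1 - q) * -I := mul_nonneg (mul_nonneg hA (sub_nonneg.2 hq)) (neg_nonneg.2 hI)
  nlinarith

theorem refined_policy_trust_general (T C Cp p μP K : ℝ) (β₁ β₂ : ℝ) (W : ℝ → ℝ)
    (hC : 0 < C) (hCT : C < T)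
    (hp0 : 0 < p) (hμP : 0 < μP)
    (hββ : β₁ < β₂)
    (hW : ∀ q : ℝ, W q =
      K + ((1 - C / T) / μP) * q * ∫ t in β₁..β₂, (Cp / T - p * t / T)) :
    (0 < (1 - C / T) / μP) ∧
    (β₂ ≤ Cp / p → ∀ q : ℝ, 0 ≤ q → q ≤ 1 → W 0 ≤ W q) ∧
    (Cp / p ≤ β₁ → ∀ q : ℝ, 0 ≤ q → q ≤ 1 → W 1 ≤ W q) := by
  have hT : 0 < T := hC.trans hCT
  have hA : 0 < (1 - C / T) / μP :=
    div_pos (sub_pos.2 ((div_lt_one hT).2 hCT)) hμP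
  refine ⟨hA, fun hβ₂ q hq0 _ => ?_, fun hβ₁ q _ hq1 => ?_⟩
  · rw [hW 0, hW q]
    exact add_mul_zero_mul_le hA.le (integral_div_sub_div_nonneg hT hp0 hββ.le hβ₂) hq0
  · rw [hW 1, hW q]
    exact add_mul_one_mul_le hA.le (integral_div_sub_div_nonpos hT hp0 hββ.le hβ₁) hq1

theorem refined_policy_trust (T C Cp p μP K : ℝ) (β₁ β₂ : ℝ) (W : ℝ → ℝ)
    (hCp : 0 < Cp) (hC : 0 < C) (hCT : C < T)
    (hp0 : 0 < p) (hp1 : p ≤ 1) (hμP : 0 < μP)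
    (hβ : Cp ≤ β₁) (hββ : β₁ < β₂) (hβT : β₂ ≤ T)
    (hW : ∀ q : ℝ, W q =
      K + ((1 - C / T) / μP) * q * ∫ t in β₁..β₂, (Cp / T - p * t / T)) :
    (0 < (1 - C / T) / μP) ∧
    (β₂ ≤ Cp / p → ∀ q : ℝ, 0 ≤ q → q ≤ 1 → W 0 ≤ W q) ∧
    (Cp / p ≤ β₁ → ∀ q : ℝ, 0 ≤ q → q ≤ 1 → W 1 ≤ W q) :=
  refined_policy_trust_general T C Cp p μP K β₁ β₂ W hC hCT hp0 hμP hββ hW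
end

section
/- With proactive checkpointing taken exactly for predictions falling in [C_p/p, T] (and ignored before), the fault-related waste equals Waste_fault = (1/μ)*((1-r)*T/2 + (r/p)*C_p*(1 - C_p/(2*p*T)) + D + R), i.e., (1/μ_P)*(1/T)*(∫₀^{C_p/p} p(t+D+R) dt + ∫_{C_p/p}^{T} (p(C_p+D+R)+(1-p)C_p) dt) + (1/μ_NP)*(T/2 + D + R) equals this expression. -/
theorem intervalIntegral_const_mul_add_const (c d a b : ℝ) :
    ∫ t in a..b, c * (t + d) = c * ((b ^ 2 - a ^ 2) / 2 + d * (b - a)) := by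
  rw [intervalIntegral.integral_const_mul, intervalIntegral.integral_add
    intervalIntegral.intervalIntegrable_id intervalIntegrable_const, integral_id,
    intervalIntegral.integral_const, smul_eq_mul]
  ring

/-- Over the period `[0, T]`, a fault striking at time `t` costs `p (t + D + R)` before the
threshold `Cp / p` (predictions are ignored) and a constant `p (Cp + D + R) + (1 - p) Cp`
after it (predictions are trusted). -/
theorem integral_fault_cost_eq (T Cp D R p : ℝ) (hp : p ≠ 0) :
    (∫ t in (0)..(Cp / p), p * (t + D + R))
      + ∫ _ in (Cp / p)..T, (p * (Cp + D + R) + (1 - p) * Cp)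
      = T * Cp - Cp ^ 2 / (2 * p) + p * T * (D + R) := by
  simp_rw [add_assoc, intervalIntegral_const_mul_add_const, intervalIntegral.integral_const,
    smul_eq_mul]
  field_simp
  ring

theorem optimal_policy_waste_fault_general (T Cp D R μ r p : ℝ)
    (hCp : 0 < Cp) (hp0 : 0 < p)
    (hT : Cp / p ≤ T) :
    (r / (p * μ)) * ((1 / T) *
        ((∫ t in (0)..(Cp / p), p * (t + D + R))
          + ∫ t in (Cp / p)..T, (p * (Cp + D + R) + (1 - p) * Cp)))
      + ((1 - r) / μ) * (T / 2 + D + R)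
    = (1 / μ) * ((1 - r) * (T / 2) + (r / p) * Cp * (1 - Cp / (2 * p * T))
        + D + R) := by
  have hT0 : T ≠ 0 := (lt_of_lt_of_le (div_pos hCp hp0) hT).ne'
  rw [integral_fault_cost_eq T Cp D R p hp0.ne']
  field_simp
  ring

theorem optimal_policy_waste_fault (T Cp D R μ r p : ℝ)
    (hCp : 0 < Cp) (hp0 : 0 < p) (hp1 : p ≤ 1)
    (hT : Cp / p ≤ T) (hr0 : 0 ≤ r) (hr1 : r ≤ 1)
    (hD : 0 ≤ D) (hR : 0 ≤ R) (hμ : 0 < μ) :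
    (r / (p * μ)) * ((1 / T) *
        ((∫ t in (0)..(Cp / p), p * (t + D + R))
          + ∫ t in (Cp / p)..T, (p * (Cp + D + R) + (1 - p) * Cp)))
      + ((1 - r) / μ) * (T / 2 + D + R)
    = (1 / μ) * ((1 - r) * (T / 2) + (r / p) * Cp * (1 - Cp / (2 * p * T))
        + D + R) :=
  optimal_policy_waste_fault_general T Cp D R μ r p hCp hp0 hT
end
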